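/- Define W as the κ-indexed cumulative hierarchy of partial functions from previous stages to A, with α ∈_W β := ⟆∃_{t∈dom(β)}(β(t) × (t =_W α)) and α =_W β := (α ⊆_W β) × (β ⊆_W α) where α ⊆_W β := ⋀_{t∈dom(α)}(α(t) → t ∈_W β). Then there exists ρ ∈ Σ such that ρ ≤ ⋀_{α∈W}(α =_W α) (equality is realized-reflexive). -/

import Mathlib

universe u v

/-- An implicative algebra: a complete lattice with an implication antitone in the
first argument, monotone in the second, distributing over arbitrary meets in the
second argument, together with a separator `Sep` which is upward closed, closed
under modus ponens, and contains the combinators K and S. -/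
structure ImplicativeAlgebra (A : Type u) [CompleteLattice A] where
  imp : A → A → A
  imp_anti : ∀ ⦃a a' b : A⦄, a ≤ a' → imp a' b ≤ imp a b
  imp_mono : ∀ ⦃a b b' : A⦄, b ≤ b' → imp a b ≤ imp a b'
  imp_sInf : ∀ (a : A) (S : Set A), imp a (sInf S) = ⨅ b ∈ S, imp a b
  Sep : Set A
  sep_upward : ∀ ⦃a b : A⦄, a ∈ Sep → a ≤ b → b ∈ Sep
  sep_mp : ∀ ⦃a b : A⦄, imp a b ∈ Sep → a ∈ Sep → b ∈ Sep
  sep_K : (⨅ a : A, ⨅ b : A, imp a (imp b a)) ∈ Sep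
  sep_S : (⨅ a : A, ⨅ b : A, ⨅ c : A,
      imp (imp a (imp b c)) (imp (imp a b) (imp a c))) ∈ Sep

namespace ImplicativeAlgebra

variable {A : Type u} [CompleteLattice A] (𝔸 : ImplicativeAlgebra A)

/-- Application: `a · b := ⋀ {x | a ≤ b → x}`. -/
def app (a b : A) : A := sInf {x : A | a ≤ 𝔸.imp b x}

/-- Implicative conjunction `a × b`. -/
def itimes (a b : A) : A := ⨅ x : A, 𝔸.imp (𝔸.imp a (𝔸.imp b x)) x

/-- Implicative disjunction `a + b`. -/
def iplus (a b : A) : A := ⨅ x : A, 𝔸.imp (𝔸.imp a x) (𝔸.imp (𝔸.imp b x) x)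

/-- Second-order encoding of the existential quantifier. -/
def iexists {ι : Sort v} (f : ι → A) : A := ⨅ x : A, 𝔸.imp (⨅ i, 𝔸.imp (f i) x) x

/-- Encoding of k = λx.λy.x. -/
def kComb : A := ⨅ a : A, 𝔸.imp a (⨅ b : A, 𝔸.imp b a)

/-- Encoding of λx.λy.y. -/
def kbarComb : A := ⨅ a : A, 𝔸.imp a (⨅ b : A, 𝔸.imp b b)

/-- Encoding of the pairing combinator p = λx.λy.λz.zxy. -/
def pComb : A := ⨅ a : A, 𝔸.imp a (⨅ b : A, 𝔸.imp b (⨅ c : A, 𝔸.imp c (𝔸.app (𝔸.app c a) b)))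

/-- Encoding of the first projection p₁ = λu.u k. -/
def p1Comb : A := ⨅ u : A, 𝔸.imp u (𝔸.app u 𝔸.kComb)

/-- Encoding of the second projection p₂ = λv.v k̄. -/
def p2Comb : A := ⨅ u : A, 𝔸.imp u (𝔸.app u 𝔸.kbarComb)

/-- Encoding of the existential-introduction combinator e = λx.λz.zx. -/
def eComb : A := ⨅ a : A, 𝔸.imp a (⨅ c : A, 𝔸.imp c (𝔸.app c a))

end ImplicativeAlgebra

/-- Names of the implicative model of set theory: a name is a (set-indexed)
family of previously constructed names, each labelled by a truth value in `A`
(a partial function from names to `A`, presented as a family). -/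
inductive Name (A : Type u) : Type (u + 1)
  | mk (ι : Type u) (elem : ι → Name A) (val : ι → A) : Name A

namespace Name

/-- The (index set of the) domain of a name. -/
def idx {A : Type u} : Name A → Type u
  | .mk ι _ _ => ι

/-- The elements of the domain of a name. -/
def elem {A : Type u} : (α : Name A) → α.idx → Name A
  | .mk _ e _ => e

/-- The truth value attached to each element of the domain of a name. -/
def val {A : Type u} : (α : Name A) → α.idx → A
  | .mk _ _ v => v

variable {A : Type u} [CompleteLattice A]

/-- `eqPair 𝔸 α β = (α ⊆_W β, β ⊆_W α)`, defined by simultaneous recursion,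
where `α ⊆_W β := ⋀_{t ∈ dom α}(α(t) → t ∈_W β)` and
`t ∈_W β := ∃_{u ∈ dom β}(β(u) × (u =_W t))` and `u =_W t := (u ⊆_W t) × (t ⊆_W u)`. -/
def eqPair (𝔸 : ImplicativeAlgebra A) : Name A → Name A → A × A
  | .mk _ e v, .mk _ e' v' =>
    (⨅ i, 𝔸.imp (v i) (𝔸.iexists fun j => 𝔸.itimes (v' j)
        (𝔸.itimes (eqPair 𝔸 (e i) (e' j)).2 (eqPair 𝔸 (e i) (e' j)).1)),
     ⨅ j, 𝔸.imp (v' j) (𝔸.iexists fun i => 𝔸.itimes (v i)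
        (𝔸.itimes (eqPair 𝔸 (e i) (e' j)).1 (eqPair 𝔸 (e i) (e' j)).2)))

/-- `α ⊆_W β`. -/
def subW (𝔸 : ImplicativeAlgebra A) (α β : Name A) : A := (eqPair 𝔸 α β).1

/-- `α =_W β := (α ⊆_W β) × (β ⊆_W α)`. -/
def eqW (𝔸 : ImplicativeAlgebra A) (α β : Name A) : A :=
  𝔸.itimes (eqPair 𝔸 α β).1 (eqPair 𝔸 α β).2

/-- `α ∈_W β := ∃_{t ∈ dom β}(β(t) × (t =_W α))`. -/
def memW (𝔸 : ImplicativeAlgebra A) (α β : Name A) : A :=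
  𝔸.iexists fun j : β.idx => 𝔸.itimes (β.val j) (eqW 𝔸 (β.elem j) α)

end Name

/-!
Let `σ_r := λx. e (p x r)` and `ρ := y f` with `f := λr. p σ_r σ_r`; the fixed-point property gives
`ρ ≤ p σ σ` for `σ := σ_ρ`. By induction on `α`, `σ` realizes `α ⊆_W α`: for `a` realizing `α(t)`,
`σ a` reduces to `e (p a ρ)`, which realizes `t ∈_W α` with `t` itself as witness, since `ρ ≤ p σ σ`
realizes `t =_W t` by the induction hypothesis. Bracket abstraction over `K` and `S` puts all these
λ-terms in the separator.
-/

namespace ImplicativeAlgebra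

variable {A : Type u} [CompleteLattice A] (𝔸 : ImplicativeAlgebra A)

local infixl:100 " ⬝ " => 𝔸.app

theorem le_imp_app (a b : A) : a ≤ 𝔸.imp b (a ⬝ b) := by
  rw [app, 𝔸.imp_sInf]
  exact le_iInf₂ fun _ hx => hx

theorem app_le_iff {a b c : A} : a ⬝ b ≤ c ↔ a ≤ 𝔸.imp b c :=
  ⟨fun h => (𝔸.le_imp_app a b).trans (𝔸.imp_mono h), fun h => sInf_le h⟩

theorem le_iInf_imp_iff {ι : Sort v} {t : A} {a b : ι → A} :
    t ≤ ⨅ i, 𝔸.imp (a i) (b i) ↔ ∀ i, t ⬝ a i ≤ b i := by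
  simp only [le_iInf_iff, app_le_iff]

theorem imp_iInf {ι : Sort v} (a : A) (b : ι → A) :
    𝔸.imp a (⨅ i, b i) = ⨅ i, 𝔸.imp a (b i) := by
  rw [← sInf_range, 𝔸.imp_sInf, iInf_range]

theorem app_mono {a a' b b' : A} (ha : a ≤ a') (hb : b ≤ b') : a ⬝ b ≤ a' ⬝ b' :=
  (𝔸.app_le_iff).2 <| ha.trans <| (𝔸.le_imp_app a' b').trans (𝔸.imp_anti hb)

theorem app_mem_sep {a b : A} (ha : a ∈ 𝔸.Sep) (hb : b ∈ 𝔸.Sep) : a ⬝ b ∈ 𝔸.Sep :=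
  𝔸.sep_mp (𝔸.sep_upward ha (𝔸.le_imp_app a b)) hb

theorem kComb_mem_sep : 𝔸.kComb ∈ 𝔸.Sep := by
  simpa only [kComb, imp_iInf] using 𝔸.sep_K

theorem kComb_app_app_le (a b : A) : 𝔸.kComb ⬝ a ⬝ b ≤ a := by
  rw [app_le_iff, app_le_iff]
  exact (iInf_le _ a).trans (𝔸.imp_mono (iInf_le _ b))

def sComb : A :=
  ⨅ a : A, ⨅ b : A, ⨅ c : A, 𝔸.imp (𝔸.imp a (𝔸.imp b c)) (𝔸.imp (𝔸.imp a b) (𝔸.imp a c))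

theorem sComb_mem_sep : 𝔸.sComb ∈ 𝔸.Sep := 𝔸.sep_S

theorem sComb_app_app_app_le (f g x : A) : 𝔸.sComb ⬝ f ⬝ g ⬝ x ≤ f ⬝ x ⬝ (g ⬝ x) := by
  rw [app_le_iff, app_le_iff, app_le_iff]
  have hf : f ≤ 𝔸.imp x (𝔸.imp (g ⬝ x) (f ⬝ x ⬝ (g ⬝ x))) :=
    (𝔸.le_imp_app f x).trans (𝔸.imp_mono (𝔸.le_imp_app _ _))
  calc 𝔸.sComb
      ≤ 𝔸.imp (𝔸.imp x (𝔸.imp (g ⬝ x) (f ⬝ x ⬝ (g ⬝ x))))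
          (𝔸.imp (𝔸.imp x (g ⬝ x)) (𝔸.imp x (f ⬝ x ⬝ (g ⬝ x)))) :=
        (iInf_le _ x).trans ((iInf_le _ _).trans (iInf_le _ _))
    _ ≤ 𝔸.imp f (𝔸.imp g (𝔸.imp x (f ⬝ x ⬝ (g ⬝ x)))) :=
        (𝔸.imp_anti hf).trans (𝔸.imp_mono (𝔸.imp_anti (𝔸.le_imp_app g x)))

/-- Combinatory terms in `n` de Bruijn variables (`var 0` is the innermost binder), with
constants from the separator. -/
inductive Term : ℕ → Type u
  | var {n : ℕ} : Fin n → Term n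
  | const {n : ℕ} (c : A) : c ∈ 𝔸.Sep → Term n
  | app {n : ℕ} : Term n → Term n → Term n

namespace Term

variable {𝔸} {n : ℕ}

def eval (ρ : Fin n → A) : Term 𝔸 n → A
  | var i => ρ i
  | const c _ => c
  | app t u => t.eval ρ ⬝ u.eval ρ

/-- Bracket abstraction: `λx.x := S K K`, `λx.t := K t` for `t` free of `x`,
`λx.(t u) := S (λx.t) (λx.u)`. -/
def lam : Term 𝔸 (n + 1) → Term 𝔸 n
  | var i =>
    Fin.cases (app (app (const _ 𝔸.sComb_mem_sep) (const _ 𝔸.kComb_mem_sep))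
      (const _ 𝔸.kComb_mem_sep)) (fun j => app (const _ 𝔸.kComb_mem_sep) (var j)) i
  | const c hc => app (const _ 𝔸.kComb_mem_sep) (const c hc)
  | app t u => app (app (const _ 𝔸.sComb_mem_sep) (lam t)) (lam u)

theorem eval_lam_app_le (ρ : Fin n → A) (a : A) :
    (t : Term 𝔸 (n + 1)) → t.lam.eval ρ ⬝ a ≤ t.eval (Fin.cons a ρ)
  | var i => by
    induction i using Fin.cases with
    | zero => exact (𝔸.sComb_app_app_app_le _ _ _).trans (𝔸.kComb_app_app_le _ _)
    | succ j => exact 𝔸.kComb_app_app_le _ _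
  | const _ _ => 𝔸.kComb_app_app_le _ _
  | app t u =>
    (𝔸.sComb_app_app_app_le _ _ _).trans
      (𝔸.app_mono (eval_lam_app_le ρ a t) (eval_lam_app_le ρ a u))

theorem eval_lam_lam_app_app_le (ρ : Fin n → A) (a b : A) (t : Term 𝔸 (n + 2)) :
    t.lam.lam.eval ρ ⬝ a ⬝ b ≤ t.eval (Fin.cons b (Fin.cons a ρ)) :=
  (𝔸.app_mono (eval_lam_app_le ρ a _) le_rfl).trans (eval_lam_app_le _ b t)

theorem eval_mem_sep {ρ : Fin n → A} (hρ : ∀ i, ρ i ∈ 𝔸.Sep) :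
    (t : Term 𝔸 n) → t.eval ρ ∈ 𝔸.Sep
  | var i => hρ i
  | const _ hc => hc
  | app t u => 𝔸.app_mem_sep (eval_mem_sep hρ t) (eval_mem_sep hρ u)

theorem eval_elim0_mem_sep (t : Term 𝔸 0) : t.eval Fin.elim0 ∈ 𝔸.Sep :=
  eval_mem_sep (fun i => i.elim0) t

end Term

open Term

theorem pComb_mem_sep : 𝔸.pComb ∈ 𝔸.Sep := by
  let body : Term 𝔸 3 := .app (.app (.var 0) (.var 2)) (.var 1)
  refine 𝔸.sep_upward (eval_elim0_mem_sep body.lam.lam.lam) ?_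
  simp only [pComb, le_iInf_imp_iff]
  exact fun a b c =>
    (𝔸.app_mono (eval_lam_lam_app_app_le _ a b body.lam) le_rfl).trans (eval_lam_app_le _ c body)

theorem eComb_mem_sep : 𝔸.eComb ∈ 𝔸.Sep := by
  let body : Term 𝔸 2 := .app (.var 0) (.var 1)
  refine 𝔸.sep_upward (eval_elim0_mem_sep body.lam.lam) ?_
  simp only [eComb, le_iInf_imp_iff]
  exact fun a c => eval_lam_lam_app_app_le _ a c body

theorem pComb_app_app_le_itimes {x y a b : A} (hx : x ≤ a) (hy : y ≤ b) :
    𝔸.pComb ⬝ x ⬝ y ≤ 𝔸.itimes a b := by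
  refine le_iInf fun z => ?_
  have hpair : 𝔸.pComb ⬝ x ⬝ y ≤ ⨅ c, 𝔸.imp c (c ⬝ x ⬝ y) := by
    rw [app_le_iff, app_le_iff]
    exact (iInf_le _ x).trans (𝔸.imp_mono (iInf_le _ y))
  have hcase : 𝔸.imp a (𝔸.imp b z) ⬝ x ⬝ y ≤ z := by
    rw [app_le_iff, app_le_iff]
    exact (𝔸.imp_anti hx).trans (𝔸.imp_mono (𝔸.imp_anti hy))
  exact hpair.trans ((iInf_le _ _).trans (𝔸.imp_mono hcase))

theorem eComb_app_le_iexists {ι : Sort v} {f : ι → A} {x : A} (i : ι) (hx : x ≤ f i) :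
    𝔸.eComb ⬝ x ≤ 𝔸.iexists f := by
  refine le_iInf fun z => ?_
  have hintro : 𝔸.eComb ⬝ x ≤ ⨅ c, 𝔸.imp c (c ⬝ x) := by
    rw [app_le_iff]
    exact iInf_le _ x
  have helim : (⨅ j, 𝔸.imp (f j) z) ⬝ x ≤ z := by
    rw [app_le_iff]
    exact (iInf_le _ i).trans (𝔸.imp_anti hx)
  exact hintro.trans ((iInf_le _ _).trans (𝔸.imp_mono helim))

def IsFixedPointCombinator (y : A) : Prop := ∀ f, y ⬝ f ≤ f ⬝ (y ⬝ f)

/-- Turing's combinator `Θ := W W` with `W := λx f. f (x x f)`. -/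
theorem exists_isFixedPointCombinator : ∃ y ∈ 𝔸.Sep, 𝔸.IsFixedPointCombinator y := by
  let body : Term 𝔸 2 := .app (.var 0) (.app (.app (.var 1) (.var 1)) (.var 0))
  have hW := eval_elim0_mem_sep body.lam.lam
  exact ⟨_, 𝔸.app_mem_sep hW hW, fun f => eval_lam_lam_app_app_le _ _ f body⟩

theorem exists_reflexivity_realizers :
    ∃ ρ ∈ 𝔸.Sep, ∃ σ : A, ρ ≤ 𝔸.pComb ⬝ σ ⬝ σ ∧ ∀ a, σ ⬝ a ≤ 𝔸.eComb ⬝ (𝔸.pComb ⬝ a ⬝ ρ) := by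
  obtain ⟨y, hy, hfix⟩ := 𝔸.exists_isFixedPointCombinator
  -- `e (p x r)` in the variables `x` (index 0) and `r` (index 1)
  let body : Term 𝔸 2 :=
    .app (.const _ 𝔸.eComb_mem_sep) (.app (.app (.const _ 𝔸.pComb_mem_sep) (.var 0)) (.var 1))
  let f : Term 𝔸 0 := (Term.app (.app (.const _ 𝔸.pComb_mem_sep) body.lam) body.lam).lam
  let ρ := y ⬝ f.eval Fin.elim0
  refine ⟨ρ, 𝔸.app_mem_sep hy (eval_elim0_mem_sep f), body.lam.eval ![ρ], ?_,
    fun a => eval_lam_app_le _ a body⟩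
  exact (hfix _).trans (eval_lam_app_le _ ρ _)

end ImplicativeAlgebra

namespace Name

variable {A : Type u} [CompleteLattice A] (𝔸 : ImplicativeAlgebra A)

local infixl:100 " ⬝ " => 𝔸.app

theorem le_eqPair_self {ρ σ : A} (hρ : ρ ≤ 𝔸.pComb ⬝ σ ⬝ σ)
    (hσ : ∀ a, σ ⬝ a ≤ 𝔸.eComb ⬝ (𝔸.pComb ⬝ a ⬝ ρ)) (α : Name A) :
    σ ≤ (eqPair 𝔸 α α).1 ∧ σ ≤ (eqPair 𝔸 α α).2 := by
  induction α with
  | mk ι e v ih =>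
    have hwitness : ∀ i (X Y : ι → A), ρ ≤ 𝔸.itimes (X i) (Y i) →
        σ ⬝ v i ≤ 𝔸.iexists fun j => 𝔸.itimes (v j) (𝔸.itimes (X j) (Y j)) := fun i _ _ hi =>
      (hσ _).trans (𝔸.eComb_app_le_iexists i (𝔸.pComb_app_app_le_itimes le_rfl hi))
    simp only [eqPair, 𝔸.le_iInf_imp_iff]
    exact ⟨fun i => hwitness i _ _ (hρ.trans (𝔸.pComb_app_app_le_itimes (ih i).2 (ih i).1)),
      fun i => hwitness i _ _ (hρ.trans (𝔸.pComb_app_app_le_itimes (ih i).1 (ih i).2))⟩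

end Name

/-- equality in the implicative model is realized-reflexive:
there is ρ ∈ Σ with ρ ≤ ⋀_{α∈W}(α =_W α). -/
theorem eqW_refl_realized {A : Type u} [CompleteLattice A]
    (𝔸 : ImplicativeAlgebra A) :
    ∃ ρ ∈ 𝔸.Sep, ρ ≤ ⨅ α : Name A, Name.eqW 𝔸 α α := by
  obtain ⟨ρ, hρ_sep, σ, hρ, hσ⟩ := 𝔸.exists_reflexivity_realizers
  refine ⟨ρ, hρ_sep, le_iInf fun α => ?_⟩
  obtain ⟨h₁, h₂⟩ := Name.le_eqPair_self 𝔸 hρ hσ α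
  exact hρ.trans (𝔸.pComb_app_app_le_itimes h₁ h₂)
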